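/- Suppose n is odd. A divisor δ ∈ 𝒟 lies in 𝒫 = 𝒫₁ + 𝒫₂ + 𝒫₃ if and only if: (1) Σ_{v∈V} ι(v)·δ(v) = 0 in ℤ/nℤ, where ι assigns to each of z_i^j, x_i^j, y_i^j its index i ∈ ℤ/nℤ; and (2) for each 1 ≤ j ≤ t, Σ_{i∈ℤ/nℤ} δ(x_i^j) ≡ Σ_{i∈ℤ/nℤ} δ(y_i^j) modulo n. -/

import Mathlib

open scoped BigOperators

section Setup

variable (n s t : ℕ) [NeZero n]

/-- The vertex set: `Sum.inl (j,i)` is `z_i^j`, `Sum.inr (Sum.inl (j,i))` is `x_i^j`,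
`Sum.inr (Sum.inr (j,i))` is `y_i^j`. -/
abbrev Vrt := (Fin s × ZMod n) ⊕ ((Fin t × ZMod n) ⊕ (Fin t × ZMod n))

def zv (j : Fin s) (i : ZMod n) : Vrt n s t := Sum.inl (j, i)
def xv (j : Fin t) (i : ZMod n) : Vrt n s t := Sum.inr (Sum.inl (j, i))
def yv (j : Fin t) (i : ZMod n) : Vrt n s t := Sum.inr (Sum.inr (j, i))

/-- The involution σ₁. -/
def sig1 : Vrt n s t → Vrt n s t
  | Sum.inl (j, i) => Sum.inl (j, 1 - i)
  | Sum.inr (Sum.inl (j, i)) => Sum.inr (Sum.inr (j, 1 - i))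
  | Sum.inr (Sum.inr (j, i)) => Sum.inr (Sum.inl (j, 1 - i))

/-- The involution σ₂. -/
def sig2 : Vrt n s t → Vrt n s t
  | Sum.inl (j, i) => Sum.inl (j, 2 - i)
  | Sum.inr (Sum.inl (j, i)) => Sum.inr (Sum.inr (j, 2 - i))
  | Sum.inr (Sum.inr (j, i)) => Sum.inr (Sum.inl (j, 2 - i))

/-- The rotation ρ = σ₂ ∘ σ₁. -/
def rho : Vrt n s t → Vrt n s t := sig2 n s t ∘ sig1 n s t

/-- The index of a vertex, an element of ℤ/nℤ. -/
def idx : Vrt n s t → ZMod n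
  | Sum.inl (_, i) => i
  | Sum.inr (Sum.inl (_, i)) => i
  | Sum.inr (Sum.inr (_, i)) => i

/-- The group 𝒟 of divisors of total degree zero. -/
def DivD : AddSubgroup (Vrt n s t → ℤ) where
  carrier := {δ | ∑ v, δ v = 0}
  zero_mem' := by simp
  add_mem' := by
    intro a b ha hb
    simp only [Set.mem_setOf_eq, Pi.add_apply, Finset.sum_add_distrib] at *
    simp [ha, hb]
  neg_mem' := by
    intro a ha
    simp only [Set.mem_setOf_eq, Pi.neg_apply, Finset.sum_neg_distrib] at *
    simp [ha]

/-- 𝒫₁ : degree-zero divisors invariant under σ₁ with even values at σ₁-fixed vertices. -/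
def Pgp1 : AddSubgroup (Vrt n s t → ℤ) where
  carrier := {δ | (∑ v, δ v = 0) ∧ (∀ v, δ (sig1 n s t v) = δ v) ∧
      ∀ v, sig1 n s t v = v → Even (δ v)}
  zero_mem' := ⟨by simp, fun _ => rfl, fun _ _ => ⟨0, by simp⟩⟩
  add_mem' := by
    rintro a b ⟨ha0, ha1, ha2⟩ ⟨hb0, hb1, hb2⟩
    refine ⟨?_, fun v => by simp [ha1 v, hb1 v], fun v hv => (ha2 v hv).add (hb2 v hv)⟩
    simp [Finset.sum_add_distrib, ha0, hb0]
  neg_mem' := by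
    rintro a ⟨ha0, ha1, ha2⟩
    exact ⟨by simp [Finset.sum_neg_distrib, ha0], fun v => by simp [ha1 v],
      fun v hv => (ha2 v hv).neg⟩

/-- 𝒫₂ : degree-zero divisors invariant under σ₂ with even values at σ₂-fixed vertices. -/
def Pgp2 : AddSubgroup (Vrt n s t → ℤ) where
  carrier := {δ | (∑ v, δ v = 0) ∧ (∀ v, δ (sig2 n s t v) = δ v) ∧
      ∀ v, sig2 n s t v = v → Even (δ v)}
  zero_mem' := ⟨by simp, fun _ => rfl, fun _ _ => ⟨0, by simp⟩⟩
  add_mem' := by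
    rintro a b ⟨ha0, ha1, ha2⟩ ⟨hb0, hb1, hb2⟩
    refine ⟨?_, fun v => by simp [ha1 v, hb1 v], fun v hv => (ha2 v hv).add (hb2 v hv)⟩
    simp [Finset.sum_add_distrib, ha0, hb0]
  neg_mem' := by
    rintro a ⟨ha0, ha1, ha2⟩
    exact ⟨by simp [Finset.sum_neg_distrib, ha0], fun v => by simp [ha1 v],
      fun v hv => (ha2 v hv).neg⟩

/-- 𝒫₃ : degree-zero divisors invariant under ρ. -/
def Pgp3 : AddSubgroup (Vrt n s t → ℤ) where
  carrier := {δ | (∑ v, δ v = 0) ∧ ∀ v, δ (rho n s t v) = δ v}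
  zero_mem' := ⟨by simp, fun _ => rfl⟩
  add_mem' := by
    rintro a b ⟨ha0, ha1⟩ ⟨hb0, hb1⟩
    exact ⟨by simp [Finset.sum_add_distrib, ha0, hb0], fun v => by simp [ha1 v, hb1 v]⟩
  neg_mem' := by
    rintro a ⟨ha0, ha1⟩
    exact ⟨by simp [Finset.sum_neg_distrib, ha0], fun v => by simp [ha1 v]⟩

/-- 𝒫₀ : degree-zero divisors constant on each D_n-orbit with even values at the z-vertices
(the pullbacks of degree-zero divisors on G/D_n). -/
def Pgp0 : AddSubgroup (Vrt n s t → ℤ) where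
  carrier := {δ | (∑ v, δ v = 0) ∧
      (∀ j i₁ i₂, δ (zv n s t j i₁) = δ (zv n s t j i₂)) ∧
      (∀ j i₁ i₂, δ (xv n s t j i₁) = δ (xv n s t j i₂)) ∧
      (∀ j i₁ i₂, δ (xv n s t j i₁) = δ (yv n s t j i₂)) ∧
      ∀ j i, Even (δ (zv n s t j i))}
  zero_mem' := ⟨by simp, fun _ _ _ => rfl, fun _ _ _ => rfl, fun _ _ _ => rfl,
    fun _ _ => ⟨0, by simp⟩⟩
  add_mem' := by
    rintro a b ⟨ha0, ha1, ha2, ha3, ha4⟩ ⟨hb0, hb1, hb2, hb3, hb4⟩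
    exact ⟨by simp [Finset.sum_add_distrib, ha0, hb0],
      fun j i₁ i₂ => by simp [ha1 j i₁ i₂, hb1 j i₁ i₂],
      fun j i₁ i₂ => by simp [ha2 j i₁ i₂, hb2 j i₁ i₂],
      fun j i₁ i₂ => by simp [ha3 j i₁ i₂, hb3 j i₁ i₂],
      fun j i => (ha4 j i).add (hb4 j i)⟩
  neg_mem' := by
    rintro a ⟨ha0, ha1, ha2, ha3, ha4⟩
    exact ⟨by simp [Finset.sum_neg_distrib, ha0],
      fun j i₁ i₂ => by simp [ha1 j i₁ i₂],
      fun j i₁ i₂ => by simp [ha2 j i₁ i₂],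
      fun j i₁ i₂ => by simp [ha3 j i₁ i₂],
      fun j i => (ha4 j i).neg⟩

/-- σ₁ as a permutation of the vertex set. -/
def sig1e : Equiv.Perm (Vrt n s t) where
  toFun := sig1 n s t
  invFun := sig1 n s t
  left_inv := by rintro (⟨j, i⟩ | ⟨j, i⟩ | ⟨j, i⟩) <;> simp [sig1, sub_sub_cancel]
  right_inv := by rintro (⟨j, i⟩ | ⟨j, i⟩ | ⟨j, i⟩) <;> simp [sig1, sub_sub_cancel]

/-- σ₂ as a permutation of the vertex set. -/
def sig2e : Equiv.Perm (Vrt n s t) where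
  toFun := sig2 n s t
  invFun := sig2 n s t
  left_inv := by rintro (⟨j, i⟩ | ⟨j, i⟩ | ⟨j, i⟩) <;> simp [sig2, sub_sub_cancel]
  right_inv := by rintro (⟨j, i⟩ | ⟨j, i⟩ | ⟨j, i⟩) <;> simp [sig2, sub_sub_cancel]

/-- The dihedral group D_n, realized as the subgroup of permutations of the vertex set
generated by σ₁ and σ₂. -/
def dihedral : Subgroup (Equiv.Perm (Vrt n s t)) :=
  Subgroup.closure {sig1e n s t, sig2e n s t}

/-- The multigraph with `w u v` edges between `u` and `v`, seen as a simple graph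
recording adjacency. -/
def wGraph (w : Vrt n s t → Vrt n s t → ℕ) : SimpleGraph (Vrt n s t) where
  Adj u v := u ≠ v ∧ (w u v ≠ 0 ∨ w v u ≠ 0)
  symm := ⟨by rintro u v ⟨h1, h2⟩; exact ⟨h1.symm, h2.symm⟩⟩
  loopless := ⟨by rintro v ⟨h, _⟩; exact h rfl⟩

/-- The firing divisor `L_v`. -/
def fire (w : Vrt n s t → Vrt n s t → ℕ) (v u : Vrt n s t) : ℤ :=
  if u = v then -(∑ x, (w v x : ℤ)) else (w u v : ℤ)

/-- The lattice ℒ generated by the firing divisors. -/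
def FireLat (w : Vrt n s t → Vrt n s t → ℕ) : AddSubgroup (Vrt n s t → ℤ) :=
  AddSubgroup.closure (Set.range (fire n s t w))

/-- Harmonicity: no nontrivial element of D_n fixes both endpoints of an edge. -/
def Harmonic (w : Vrt n s t → Vrt n s t → ℕ) : Prop :=
  ∀ g ∈ dihedral n s t, g ≠ 1 →
    ∀ u v : Vrt n s t, (wGraph n s t w).Adj u v → ¬(g u = u ∧ g v = v)

/-- The critical group K(G) = 𝒟/ℒ. -/
abbrev KGrp (w : Vrt n s t → Vrt n s t → ℕ) :=
  DivD n s t ⧸ ((FireLat n s t w).addSubgroupOf (DivD n s t))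

/-- The image (𝒫 + ℒ)/ℒ of a subgroup 𝒫 of divisors in the critical group. -/
def Jsub (w : Vrt n s t → Vrt n s t → ℕ) (P : AddSubgroup (Vrt n s t → ℤ)) :
    AddSubgroup (KGrp n s t w) :=
  ((P ⊔ FireLat n s t w).addSubgroupOf (DivD n s t)).map
    (QuotientAddGroup.mk' ((FireLat n s t w).addSubgroupOf (DivD n s t)))

/-- The sum map Φ : J₁ × J₂ × J₃ → K(G). -/
def Phi (w : Vrt n s t → Vrt n s t → ℕ) :
    (Jsub n s t w (Pgp1 n s t) × Jsub n s t w (Pgp2 n s t) × Jsub n s t w (Pgp3 n s t)) →+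
      KGrp n s t w where
  toFun p := (p.1 : KGrp n s t w) + (p.2.1 : KGrp n s t w) + (p.2.2 : KGrp n s t w)
  map_zero' := by simp
  map_add' := by
    intro a b
    simp only [Prod.fst_add, Prod.snd_add, AddSubgroup.coe_add]
    abel

/-- The subgroup ℒ′ of ℒ. -/
def FireLat' (w : Vrt n s t → Vrt n s t → ℕ) : AddSubgroup (Vrt n s t → ℤ) :=
  AddSubgroup.closure
    ({d | ∃ j i, d = fire n s t w (zv n s t j i)} ∪
     {d | ∃ j i₁ i₂, d = fire n s t w (xv n s t j i₁) + fire n s t w (yv n s t j i₂)} ∪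
     {d | ∃ j, d = ∑ i, fire n s t w (xv n s t j i)} ∪
     {d | ∃ j, d = ∑ i, fire n s t w (yv n s t j i)})

end Setup

/-!
Both conditions are additive. A reflection-invariant divisor satisfies them because reindexing
by the reflection turns the weighted sum `X = ∑ ι δ` into `-X` and `2` is invertible mod `n`; a
rotation-invariant one is constant along each `ρ`-orbit, so its weighted sum is a multiple of
`∑_{i : ℤ/n} i = 0` and its orbit sums are multiples of `n`.

Conversely, work in `ℤ^V ⧸ 𝒫` and let `E v` be the class of the point `v`. The generators of `𝒫₁`
and `𝒫₂` say that `E v + E (σₖ v)` does not depend on `v`; together they give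
`E (ρ v) = E v + D` for a fixed `D`, so `n • D = 0` and `E` is affine along every orbit. The
generators of `𝒫₃` say that `n • E v` does not depend on `v`. In `δ = ∑ δ v • E v`, condition (1)
kills the `D`-part, and the rest `S = ∑ δ_r • E r` (one term per orbit `r`) has `n • S = 0` by
degree zero and `2 • S = 0` by pairing each orbit with its mirror image, using condition (2).
As `n` is odd, `S = 0`.
-/

open Finset Function

section GroupLemmas

variable {M : Type*} [AddCommGroup M]

theorem eq_zero_of_two_nsmul_eq_zero {n : ℕ} (hn : Odd n) {x : M} (h2 : 2 • x = 0)
    (hnx : n • x = 0) : x = 0 := by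
  obtain ⟨k, rfl⟩ := hn
  calc x = (2 * k + 1) • x - k • (2 • x) := by module
    _ = 0 := by rw [hnx, h2, nsmul_zero, sub_zero]

theorem sum_zsmul_eq_zero_of_const {ι : Type*} [Fintype ι] {f : ι → ℤ} {g : ι → M}
    (hf : ∑ i, f i = 0) (hg : ∀ i j, g i = g j) : ∑ i, f i • g i = 0 := by
  rcases isEmpty_or_nonempty ι with _ | ⟨⟨i₀⟩⟩
  · simp
  · simp_rw [hg _ i₀, ← sum_smul, hf, zero_smul]

end GroupLemmas

namespace ZMod

variable {n : ℕ} {M : Type*} [AddCommGroup M]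

theorem sum_univ_eq_zero_of_odd [NeZero n] (hn : Odd n) : ∑ i : ZMod n, i = 0 := by
  refine eq_zero_of_two_nsmul_eq_zero hn ?_ (by simp [nsmul_eq_mul])
  have hneg : ∑ i : ZMod n, -i = ∑ i : ZMod n, i := Equiv.sum_comp (Equiv.neg (ZMod n)) id
  have hcancel : ∑ i : ZMod n, i + ∑ i : ZMod n, -i = 0 := by simp [← sum_add_distrib]
  rwa [hneg, ← two_nsmul] at hcancel

theorem apply_natCast_eq_add_nsmul {g : ZMod n → M} {D : M} (h : ∀ i, g (i + 1) = g i + D)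
    (k : ℕ) : g k = g 0 + k • D := by
  induction k with
  | zero => simp
  | succ k ih => rw [Nat.cast_succ, h, ih, succ_nsmul, add_assoc]

theorem nsmul_eq_zero_of_add_one {g : ZMod n → M} {D : M} (h : ∀ i, g (i + 1) = g i + D) :
    n • D = 0 := by
  simpa using apply_natCast_eq_add_nsmul h n

theorem apply_eq_apply_zero [NeZero n] {g : ZMod n → M} (h : ∀ i, g (i + 1) = g i)
    (i : ZMod n) : g i = g 0 := by
  have h' : ∀ i, g (i + 1) = g i + 0 := by simpa using h
  simpa using apply_natCast_eq_add_nsmul h' i.val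

theorem exists_addMonoidHom_apply_eq_add [NeZero n] {ι : Type*} {g : ι → ZMod n → M} {D : M}
    (hD : n • D = 0) (h : ∀ r i, g r (i + 1) = g r i + D) :
    ∃ φ : ZMod n →+ M, ∀ r i, g r i = g r 0 + φ i := by
  refine ⟨lift n ⟨zmultiplesHom M D, by simpa using hD⟩, fun r i => ?_⟩
  have hφ := lift_coe n ⟨zmultiplesHom M D, by simpa using hD⟩ (i.val : ℤ)
  rw [Int.cast_natCast, natCast_zmod_val] at hφ
  rw [hφ, zmultiplesHom_apply, natCast_zsmul, ← apply_natCast_eq_add_nsmul (h r),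
    natCast_zmod_val]

theorem sum_modEq_zero_of_add_one [NeZero n] {g : ZMod n → ℤ} (h : ∀ i, g (i + 1) = g i) :
    ∑ i, g i ≡ 0 [ZMOD n] := by
  rw [sum_congr rfl fun i _ => apply_eq_apply_zero h i, sum_const, card_univ, card, nsmul_eq_mul]
  exact Int.modEq_zero_iff_dvd.2 (dvd_mul_right _ _)

theorem sum_eq_of_apply_sub [NeZero n] {g g' : ZMod n → M} (a : ZMod n)
    (h : ∀ i, g' (a - i) = g i) : ∑ i, g' i = ∑ i, g i := by
  rw [← Equiv.sum_comp (Equiv.subLeft a)]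
  simp only [Equiv.subLeft_apply, h]

end ZMod

section Rows

variable {R : Type*} [Fintype R] {n : ℕ} {τ : Equiv.Perm R}

theorem sum_zsmul_eq_zero_of_involutive {M : Type*} [AddCommGroup M] (hn : Odd n)
    (hτ : Involutive τ) {d : R → ℤ} {F : R → M} (hd : ∑ r, d r = 0)
    (hdτ : ∀ r, d r ≡ d (τ r) [ZMOD n]) (hF : ∀ r r', F r + F (τ r) = F r' + F (τ r'))
    (hnF : ∀ r r', n • F r = n • F r') : ∑ r, d r • F r = 0 := by
  choose γ hγ using fun r => (hdτ r).dvd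
  have hγsum : ∑ r, γ r = 0 := by
    have : (n : ℤ) * ∑ r, γ r = 0 := by
      rw [mul_sum, ← sum_congr rfl fun r _ => hγ r, sum_sub_distrib, hd,
        Equiv.sum_comp τ d, hd, sub_zero]
    exact (mul_eq_zero.1 this).resolve_left (by exact_mod_cast hn.pos.ne')
  have hswap : ∑ r, d r • F (τ r) = ∑ r, d (τ r) • F r := by
    rw [← Equiv.sum_comp τ fun r => d r • F (τ r)]
    simp only [hτ _]
  have hsum : ∑ r, d r • F r + ∑ r, d r • F (τ r) = 0 := by
    rw [← sum_add_distrib]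
    simp_rw [← smul_add]
    exact sum_zsmul_eq_zero_of_const hd hF
  have hdiff : ∑ r, d (τ r) • F r - ∑ r, d r • F r = 0 := by
    rw [← sum_sub_distrib]
    simp_rw [← sub_smul, hγ, mul_comm (n : ℤ), mul_smul, natCast_zsmul]
    exact sum_zsmul_eq_zero_of_const hγsum hnF
  refine eq_zero_of_two_nsmul_eq_zero hn ?_ ?_
  · rw [two_nsmul]
    calc _ = ∑ r, d r • F r + ∑ r, d r • F (τ r) - (∑ r, d (τ r) • F r - ∑ r, d r • F r) := by
          rw [hswap]; abel
      _ = 0 := by rw [hsum, hdiff, sub_zero]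
  · rw [smul_sum]
    simp_rw [smul_comm n (d _)]
    exact sum_zsmul_eq_zero_of_const hd hnF

end Rows

section Dihedral

variable {R : Type*} [Fintype R] {n : ℕ} [NeZero n] {τ : Equiv.Perm R}

theorem sum_zsmul_eq_zero_of_dihedral {M : Type*} [AddCommGroup M] (hn : Odd n)
    (hτ : Involutive τ) {G : R → ZMod n → M}
    (h₁ : ∀ r i r' i', G r i + G (τ r) (1 - i) = G r' i' + G (τ r') (1 - i'))
    (h₂ : ∀ r i r' i', G r i + G (τ r) (2 - i) = G r' i' + G (τ r') (2 - i'))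
    (h₃ : ∀ r r', ∑ i, G r i = ∑ i, G r' i)
    {d : R → ZMod n → ℤ} (hd : ∑ r, ∑ i, d r i = 0)
    (hw : ∑ r, ∑ i, i * (d r i : ZMod n) = 0)
    (hrow : ∀ r, ∑ i, d r i ≡ ∑ i, d (τ r) i [ZMOD n]) :
    ∑ r, ∑ i, d r i • G r i = 0 := by
  rcases isEmpty_or_nonempty R with _ | ⟨⟨r₀⟩⟩
  · simp
  have hstep : ∀ r i, G r (i + 1) = G r i + (G r₀ 1 - G r₀ 0) := by
    intro r i
    have e₁ := h₁ r i r₀ 0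
    have e₂ := h₂ (τ r) (1 - i) (τ r₀) 1
    rw [hτ, hτ, show (2 : ZMod n) - (1 - i) = i + 1 by ring,
      show (2 : ZMod n) - 1 = 1 by ring] at e₂
    rw [sub_zero] at e₁
    linear_combination (norm := module) e₂ - e₁
  obtain ⟨φ, hφ⟩ :=
    ZMod.exists_addMonoidHom_apply_eq_add (ZMod.nsmul_eq_zero_of_add_one (hstep r₀)) hstep
  have hpair : ∀ r r', G r 0 + G (τ r) 0 = G r' 0 + G (τ r') 0 := by
    intro r r'
    have e := h₁ r 0 r' 0
    rw [sub_zero, hφ (τ r) 1, hφ (τ r') 1] at e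
    linear_combination (norm := module) e
  have hrowsum : ∀ r, ∑ i, G r i = n • G r 0 := by
    intro r
    rw [sum_congr rfl fun i _ => hφ r i, sum_add_distrib, ← map_sum,
      ZMod.sum_univ_eq_zero_of_odd hn, map_zero, add_zero, sum_const, card_univ, ZMod.card]
  have hterm : ∀ r i, d r i • G r i = d r i • G r 0 + φ (i * (d r i : ZMod n)) := by
    intro r i
    rw [hφ r i, smul_add, ← map_zsmul, zsmul_eq_mul, mul_comm]
  calc ∑ r, ∑ i, d r i • G r i
        = ∑ r, (∑ i, d r i) • G r 0 + φ (∑ r, ∑ i, i * (d r i : ZMod n)) := by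
        simp only [hterm, sum_add_distrib, sum_smul, map_sum]
    _ = 0 := by
      rw [hw, map_zero, add_zero]
      exact sum_zsmul_eq_zero_of_involutive hn hτ (by simpa using hd) hrow hpair
        fun r r' => by rw [← hrowsum, ← hrowsum, h₃]

end Dihedral

section Invariants

variable {R : Type*} [Fintype R] {n : ℕ} [NeZero n] {d : R → ZMod n → ℤ}

theorem sum_mul_eq_zero_of_reflection (hn : Odd n) {τ : Equiv.Perm R} {a : ZMod n}
    (hd : ∑ r, ∑ i, d r i = 0) (h : ∀ r i, d (τ r) (a - i) = d r i) :
    ∑ r, ∑ i, i * (d r i : ZMod n) = 0 := by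
  have hreflect : ∑ r, ∑ i, i * (d r i : ZMod n) = ∑ r, ∑ i, (a - i) * (d r i : ZMod n) := by
    rw [← Equiv.sum_comp τ]
    refine sum_congr rfl fun r _ => ?_
    rw [← Equiv.sum_comp (Equiv.subLeft a)]
    simp only [Equiv.subLeft_apply, h]
  have hd' : ∑ r, ∑ i, (d r i : ZMod n) = 0 := by simpa using congrArg (Int.cast : ℤ → ZMod n) hd
  refine eq_zero_of_two_nsmul_eq_zero hn ?_ (by simp [nsmul_eq_mul])
  rw [two_nsmul]
  nth_rw 2 [hreflect]
  simp only [← sum_add_distrib, ← add_mul, add_sub_cancel, ← mul_sum, hd', mul_zero]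


theorem sum_mul_eq_zero_of_rotation (hn : Odd n) (h : ∀ r i, d r (i + 1) = d r i) :
    ∑ r, ∑ i, i * (d r i : ZMod n) = 0 := by
  refine sum_eq_zero fun r _ => ?_
  rw [sum_congr rfl fun i _ => by rw [ZMod.apply_eq_apply_zero (h r) i], ← sum_mul,
    ZMod.sum_univ_eq_zero_of_odd hn, zero_mul]

end Invariants

section Vertices

variable {n s t : ℕ} [NeZero n]

/-- `vtx r i` is the vertex of index `i` in row `r`: the rows `Sum.inl j`, `Sum.inr (Sum.inl j)`
and `Sum.inr (Sum.inr j)` are the `ρ`-orbits of `z^j`, `x^j` and `y^j`, and both reflections act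
on rows by `rowSwap`. -/
def vtxEquiv (n s t : ℕ) [NeZero n] : (Fin s ⊕ Fin t ⊕ Fin t) × ZMod n ≃ Vrt n s t :=
  (Equiv.sumProdDistrib _ _ _).trans (Equiv.sumCongr (Equiv.refl _) (Equiv.sumProdDistrib _ _ _))

def vtx (r : Fin s ⊕ Fin t ⊕ Fin t) (i : ZMod n) : Vrt n s t := vtxEquiv n s t (r, i)

def rowSwap (s t : ℕ) : Equiv.Perm (Fin s ⊕ Fin t ⊕ Fin t) :=
  Equiv.sumCongr (Equiv.refl _) (Equiv.sumComm _ _)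

theorem rowSwap_involutive : Involutive (rowSwap s t) := by
  rintro (j | j | j) <;> rfl

theorem sig1_vtx (r : Fin s ⊕ Fin t ⊕ Fin t) (i : ZMod n) :
    sig1 n s t (vtx r i) = vtx (rowSwap s t r) (1 - i) := by
  rcases r with j | j | j <;> rfl

theorem sig2_vtx (r : Fin s ⊕ Fin t ⊕ Fin t) (i : ZMod n) :
    sig2 n s t (vtx r i) = vtx (rowSwap s t r) (2 - i) := by
  rcases r with j | j | j <;> rfl

theorem rho_vtx (r : Fin s ⊕ Fin t ⊕ Fin t) (i : ZMod n) :
    rho n s t (vtx r i) = vtx r (i + 1) := by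
  have h : (2 : ZMod n) - (1 - i) = i + 1 := by ring
  rcases r with j | j | j <;> simp [rho, vtx, vtxEquiv, sig1, sig2, h]

theorem idx_vtx (r : Fin s ⊕ Fin t ⊕ Fin t) (i : ZMod n) : idx n s t (vtx r i) = i := by
  rcases r with j | j | j <;> rfl

theorem sum_vrt {M : Type*} [AddCommMonoid M] (f : Vrt n s t → M) :
    ∑ v, f v = ∑ r, ∑ i, f (vtx r i) := by
  rw [← (vtxEquiv n s t).sum_comp, Fintype.sum_prod_type]
  rfl

end Vertices

section Balanced

variable {n s t : ℕ} [NeZero n]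

def balanced (n s t : ℕ) [NeZero n] : AddSubgroup (Vrt n s t → ℤ) where
  carrier := {δ | ∑ r, ∑ i, i * (δ (vtx r i) : ZMod n) = 0 ∧
    ∀ r, ∑ i, δ (vtx r i) ≡ ∑ i, δ (vtx (rowSwap s t r) i) [ZMOD n]}
  zero_mem' := by simp
  add_mem' := by
    rintro a b ⟨ha, ha'⟩ ⟨hb, hb'⟩
    refine ⟨by simp [mul_add, sum_add_distrib, ha, hb], fun r => ?_⟩
    simpa only [Pi.add_apply, sum_add_distrib] using (ha' r).add (hb' r)
  neg_mem' := by
    rintro a ⟨ha, ha'⟩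
    refine ⟨by simp [ha], fun r => ?_⟩
    simpa only [Pi.neg_apply, sum_neg_distrib] using (ha' r).neg

theorem mem_balanced_iff (δ : Vrt n s t → ℤ) :
    δ ∈ balanced n s t ↔ (∑ v, idx n s t v * ((δ v : ℤ) : ZMod n)) = 0 ∧
      ∀ j : Fin t, (∑ i, δ (xv n s t j i)) ≡ (∑ i, δ (yv n s t j i)) [ZMOD (n : ℤ)] := by
  rw [sum_vrt]
  simp only [idx_vtx]
  refine and_congr Iff.rfl ⟨fun h j => h (Sum.inr (Sum.inl j)), fun h r => ?_⟩
  rcases r with j | j | j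
  · rfl
  · exact h j
  · exact (h j).symm

theorem mem_balanced_of_reflection (hn : Odd n) {δ : Vrt n s t → ℤ} (a : ZMod n)
    (hδ : ∑ v, δ v = 0) (h : ∀ r i, δ (vtx (rowSwap s t r) (a - i)) = δ (vtx r i)) :
    δ ∈ balanced n s t :=
  ⟨sum_mul_eq_zero_of_reflection hn (by rwa [← sum_vrt]) h,
    fun r => by rw [ZMod.sum_eq_of_apply_sub (g' := fun i => δ (vtx (rowSwap s t r) i)) a (h r)]⟩

theorem mem_balanced_of_rotation (hn : Odd n) {δ : Vrt n s t → ℤ}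
    (h : ∀ r i, δ (vtx r (i + 1)) = δ (vtx r i)) : δ ∈ balanced n s t :=
  ⟨sum_mul_eq_zero_of_rotation hn h, fun r =>
    (ZMod.sum_modEq_zero_of_add_one (h r)).trans (ZMod.sum_modEq_zero_of_add_one (h _)).symm⟩

theorem Pgp1_le_balanced (hn : Odd n) : Pgp1 n s t ≤ balanced n s t := by
  rintro δ ⟨hδ, hinv, -⟩
  exact mem_balanced_of_reflection hn 1 hδ fun r i => by rw [← sig1_vtx, hinv]

theorem Pgp2_le_balanced (hn : Odd n) : Pgp2 n s t ≤ balanced n s t := by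
  rintro δ ⟨hδ, hinv, -⟩
  exact mem_balanced_of_reflection hn 2 hδ fun r i => by rw [← sig2_vtx, hinv]

theorem Pgp3_le_balanced (hn : Odd n) : Pgp3 n s t ≤ balanced n s t := by
  rintro δ ⟨-, hinv⟩
  exact mem_balanced_of_rotation hn fun r i => by rw [← rho_vtx, hinv]

end Balanced

section OrbitDivisors

variable {V : Type*} [DecidableEq V] {σ : V → V}

def orbitDivisor (σ : V → V) (v : V) : V → ℤ := Pi.single v 1 + Pi.single (σ v) 1

theorem sum_orbitDivisor [Fintype V] (σ : V → V) (v : V) : ∑ u, orbitDivisor σ v u = 2 := by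
  simp [orbitDivisor, sum_add_distrib, one_add_one_eq_two]

theorem orbitDivisor_apply_comp (hσ : Involutive σ) (v u : V) :
    orbitDivisor σ v (σ u) = orbitDivisor σ v u := by
  simp only [orbitDivisor, Pi.add_apply, Pi.single_apply, hσ.eq_iff, hσ v]
  exact add_comm _ _

theorem even_orbitDivisor_apply (hσ : Involutive σ) (v : V) {u : V} (hu : σ u = u) :
    Even (orbitDivisor σ v u) := by
  have h : (Pi.single (σ v) 1 : V → ℤ) u = (Pi.single v 1 : V → ℤ) u := by
    simp only [Pi.single_apply, eq_comm (a := u), hσ.eq_iff, hu]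
  rw [orbitDivisor, Pi.add_apply, h]
  exact ⟨_, rfl⟩

end OrbitDivisors

section Generators

variable {n s t : ℕ}

theorem sig1_involutive : Involutive (sig1 n s t) := (sig1e n s t).left_inv

theorem sig2_involutive : Involutive (sig2 n s t) := (sig2e n s t).left_inv

variable [NeZero n]

theorem orbitDivisor_sub_mem_Pgp1 (v w : Vrt n s t) :
    orbitDivisor (sig1 n s t) v - orbitDivisor (sig1 n s t) w ∈ Pgp1 n s t :=
  ⟨by simp [sum_sub_distrib, sum_orbitDivisor],
    fun u => by simp [orbitDivisor_apply_comp sig1_involutive],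
    fun _ hu => (even_orbitDivisor_apply sig1_involutive v hu).sub
      (even_orbitDivisor_apply sig1_involutive w hu)⟩

theorem orbitDivisor_sub_mem_Pgp2 (v w : Vrt n s t) :
    orbitDivisor (sig2 n s t) v - orbitDivisor (sig2 n s t) w ∈ Pgp2 n s t :=
  ⟨by simp [sum_sub_distrib, sum_orbitDivisor],
    fun u => by simp [orbitDivisor_apply_comp sig2_involutive],
    fun _ hu => (even_orbitDivisor_apply sig2_involutive v hu).sub
      (even_orbitDivisor_apply sig2_involutive w hu)⟩

def rowDivisor (r : Fin s ⊕ Fin t ⊕ Fin t) : Vrt n s t → ℤ := ∑ i, Pi.single (vtx r i) 1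

theorem rowDivisor_vtx (r r' : Fin s ⊕ Fin t ⊕ Fin t) (i : ZMod n) :
    rowDivisor r (vtx r' i) = if r' = r then 1 else 0 := by
  by_cases h : r' = r <;>
    simp [rowDivisor, Pi.single_apply, vtx, (vtxEquiv n s t).injective.eq_iff, h]

theorem rowDivisor_sub_mem_Pgp3 (r r' : Fin s ⊕ Fin t ⊕ Fin t) :
    rowDivisor r - rowDivisor r' ∈ Pgp3 n s t := by
  refine ⟨by rw [sum_vrt]; simp [rowDivisor_vtx], fun v => ?_⟩
  obtain ⟨⟨r'', i⟩, rfl⟩ := (vtxEquiv n s t).surjective v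
  simp only [Pi.sub_apply]
  rw [← vtx, rho_vtx, rowDivisor_vtx, rowDivisor_vtx, rowDivisor_vtx, rowDivisor_vtx]

end Generators

theorem QuotientAddGroup.mk_eq_sum_zsmul_single {V : Type*} [Fintype V] [DecidableEq V]
    (P : AddSubgroup (V → ℤ)) (δ : V → ℤ) :
    (δ : (V → ℤ) ⧸ P) = ∑ v, δ v • ((Pi.single v 1 : V → ℤ) : (V → ℤ) ⧸ P) := by
  conv_lhs => rw [← univ_sum_single δ]
  simp_rw [mk_sum, ← mk_zsmul, ← Pi.single_smul, smul_eq_mul, mul_one]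

theorem mem_sup_of_balanced {n s t : ℕ} [NeZero n] (hn : Odd n) {δ : Vrt n s t → ℤ}
    (hδ : δ ∈ DivD n s t) (hbal : δ ∈ balanced n s t) :
    δ ∈ Pgp1 n s t ⊔ Pgp2 n s t ⊔ Pgp3 n s t := by
  set P := Pgp1 n s t ⊔ Pgp2 n s t ⊔ Pgp3 n s t
  let E : Vrt n s t → (Vrt n s t → ℤ) ⧸ P := fun v => (Pi.single v 1 : Vrt n s t → ℤ)
  have h₁ (v w : Vrt n s t) : E v + E (sig1 n s t v) = E w + E (sig1 n s t w) :=
    QuotientAddGroup.eq_iff_sub_mem.2 <|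
      AddSubgroup.mem_sup_left <| AddSubgroup.mem_sup_left <| orbitDivisor_sub_mem_Pgp1 v w
  have h₂ (v w : Vrt n s t) : E v + E (sig2 n s t v) = E w + E (sig2 n s t w) :=
    QuotientAddGroup.eq_iff_sub_mem.2 <|
      AddSubgroup.mem_sup_left <| AddSubgroup.mem_sup_right <| orbitDivisor_sub_mem_Pgp2 v w
  have h₃ (r r' : Fin s ⊕ Fin t ⊕ Fin t) : ∑ i, E (vtx r i) = ∑ i, E (vtx r' i) := by
    simp only [E, ← QuotientAddGroup.mk_sum]
    exact QuotientAddGroup.eq_iff_sub_mem.2 <|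
      AddSubgroup.mem_sup_right <| rowDivisor_sub_mem_Pgp3 r r'
  rw [← QuotientAddGroup.eq_zero_iff, QuotientAddGroup.mk_eq_sum_zsmul_single, sum_vrt]
  exact sum_zsmul_eq_zero_of_dihedral hn rowSwap_involutive (G := fun r i => E (vtx r i))
    (fun r i r' i' => by simpa only [sig1_vtx] using h₁ (vtx r i) (vtx r' i'))
    (fun r i r' i' => by simpa only [sig2_vtx] using h₂ (vtx r i) (vtx r' i'))
    h₃ (by rwa [← sum_vrt]) hbal.1 hbal.2

theorem mem_P_iff_of_odd_general (n s t : ℕ) [NeZero n] (hodd : Odd n)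
    (δ : Vrt n s t → ℤ) (hδ : δ ∈ DivD n s t) :
    δ ∈ Pgp1 n s t ⊔ Pgp2 n s t ⊔ Pgp3 n s t ↔
      ((∑ v, idx n s t v * ((δ v : ℤ) : ZMod n)) = 0 ∧
       (∀ j : Fin t, (∑ i, δ (xv n s t j i)) ≡ (∑ i, δ (yv n s t j i)) [ZMOD (n : ℤ)])) := by
  rw [← mem_balanced_iff]
  exact ⟨fun h => sup_le (sup_le (Pgp1_le_balanced hodd) (Pgp2_le_balanced hodd))
    (Pgp3_le_balanced hodd) h, mem_sup_of_balanced hodd hδ⟩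

/-- **membership in 𝒫 = 𝒫₁ + 𝒫₂ + 𝒫₃, n odd.** -/
theorem mem_P_iff_of_odd (n s t : ℕ) [NeZero n] (hn : 3 ≤ n) (hodd : Odd n)
    (δ : Vrt n s t → ℤ) (hδ : δ ∈ DivD n s t) :
    δ ∈ Pgp1 n s t ⊔ Pgp2 n s t ⊔ Pgp3 n s t ↔
      ((∑ v, idx n s t v * ((δ v : ℤ) : ZMod n)) = 0 ∧
       (∀ j : Fin t, (∑ i, δ (xv n s t j i)) ≡ (∑ i, δ (yv n s t j i)) [ZMOD (n : ℤ)])) :=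
  mem_P_iff_of_odd_general n s t hodd δ hδ
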